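/- Let (A,μ,α) be a Hom-alternative algebra. Then as(x²,α(y),α(z)) = α²(x)·as(x,y,z) + as(x,y,z)·α²(x) for all x,y,z ∈ A, where x² = xx. -/
import Mathlib


variable {K A : Type*} [Field K] [CharZero K] [AddCommGroup A] [Module K A]

/-- Hom-associator of a multiplication μ with twisting map α. -/
def homAs (μ : A →ₗ[K] A →ₗ[K] A) (α : A →ₗ[K] A) (x y z : A) : A :=
  μ (μ x y) (α z) - μ (α x) (μ y z)

theorem stmt7 (μ : A →ₗ[K] A →ₗ[K] A) (α : A →ₗ[K] A)
    (hmult : ∀ x y : A, α (μ x y) = μ (α x) (α y))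
    (h1 : ∀ x y : A, homAs μ α x x y = 0)
    (h2 : ∀ x y : A, homAs μ α x y y = 0)
    (h3 : ∀ x y : A, homAs μ α x y x = 0) :
    ∀ x y z : A,
      homAs μ α (μ x x) (α y) (α z)
        = μ (α (α x)) (homAs μ α x y z) + μ (homAs μ α x y z) (α (α x)) := by
  have G1 : ∀ u v w : A, homAs μ α u v w + homAs μ α v u w = 0 := by
    intro u v w
    have h := h1 (u + v) w
    have e : homAs μ α (u + v) (u + v) w
        = homAs μ α u u w + (homAs μ α u v w + homAs μ α v u w) + homAs μ α v v w := by
      simp only [homAs, map_add, LinearMap.add_apply]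
      abel
    rw [e, h1 u w, h1 v w] at h
    simpa using h
  have G2 : ∀ u v w : A, homAs μ α u v w + homAs μ α u w v = 0 := by
    intro u v w
    have h := h2 u (v + w)
    have e : homAs μ α u (v + w) (v + w)
        = homAs μ α u v v + (homAs μ α u v w + homAs μ α u w v) + homAs μ α u w w := by
      simp only [homAs, map_add, LinearMap.add_apply]
      abel
    rw [e, h2 u v, h2 u w] at h
    simpa using h
  intro x y z
  have key : homAs μ α (μ x x) (α y) (α z)
      - (μ (α (α x)) (homAs μ α x y z) + μ (homAs μ α x y z) (α (α x)))
      = (homAs μ α (α x) (α y) (μ x z) + homAs μ α (α y) (α x) (μ x z))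
      + (homAs μ α (α x) (α y) (μ z x) + homAs μ α (α y) (α x) (μ z x))
      - (homAs μ α (α x) (α y) (μ z x) + homAs μ α (α x) (μ z x) (α y))
      + (homAs μ α (α x) (α z) (μ x y) + homAs μ α (α z) (α x) (μ x y))
      - (homAs μ α (α x) (α z) (μ x y) + homAs μ α (α x) (μ x y) (α z))
      + (homAs μ α (α x) (α z) (μ y x) + homAs μ α (α z) (α x) (μ y x))
      - (homAs μ α (α x) (α z) (μ y x) + homAs μ α (α x) (μ y x) (α z))
      + (homAs μ α (α x) (μ x y) (α z) + homAs μ α (μ x y) (α x) (α z))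
      + (homAs μ α (α x) (μ z x) (α y) + homAs μ α (μ z x) (α x) (α y))
      - (homAs μ α (α y) (α x) (μ x z) + homAs μ α (α y) (μ x z) (α x))
      + (homAs μ α (α y) (α z) (μ x x) + homAs μ α (α z) (α y) (μ x x))
      - (homAs μ α (α y) (α z) (μ x x) + homAs μ α (α y) (μ x x) (α z))
      + (homAs μ α (α y) (μ x x) (α z) + homAs μ α (μ x x) (α y) (α z))
      - (homAs μ α (α z) (α x) (μ y x) + homAs μ α (α z) (μ y x) (α x))
      - (homAs μ α (α z) (α y) (μ x x) + homAs μ α (α z) (μ x x) (α y))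
      + (homAs μ α (α z) (μ y x) (α x) + homAs μ α (μ y x) (α z) (α x))
      - μ (α (α z)) (homAs μ α x x y)
      + μ (homAs μ α x x y) (α (α z))
      - μ (homAs μ α x x y + homAs μ α x y x) (α (α z))
      + μ (α (α y)) (homAs μ α x x z)
      - μ (homAs μ α x x z) (α (α y))
      - μ (α (α y)) (homAs μ α x x z + homAs μ α x z x)
      + μ (homAs μ α x x z + homAs μ α x z x) (α (α y))
      - μ (α (α x)) (homAs μ α x y z + homAs μ α y x z)
      - μ (homAs μ α x y z + homAs μ α y x z) (α (α x))
      - μ (homAs μ α x z x + homAs μ α z x x) (α (α y)) := by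
    simp only [homAs, hmult, map_add, map_sub, LinearMap.add_apply, LinearMap.sub_apply]
    abel
  rw [G1 (α x) (α y) (μ x z), G1 (α x) (α y) (μ z x), G2 (α x) (α y) (μ z x),
      G1 (α x) (α z) (μ x y), G2 (α x) (α z) (μ x y), G1 (α x) (α z) (μ y x),
      G2 (α x) (α z) (μ y x), G1 (α x) (μ x y) (α z), G1 (α x) (μ z x) (α y),
      G2 (α y) (α x) (μ x z), G1 (α y) (α z) (μ x x), G2 (α y) (α z) (μ x x),
      G1 (α y) (μ x x) (α z), G2 (α z) (α x) (μ y x), G2 (α z) (α y) (μ x x),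
      G1 (α z) (μ y x) (α x), h1 x y, h3 x y, h1 x z, h3 x z, h2 z x,
      G1 x y z] at key
  simp only [map_zero, LinearMap.zero_apply, add_zero, zero_add, sub_zero,
    neg_zero, add_zero] at key
  exact sub_eq_zero.mp key
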